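/- For all integers k ≥ 1 and l ≥ 0, the integer 1 + c_k·d_l is negative and odd, and hence is not a square in the ring ℤ[√(-2)]. -/
import Mathlib


def c : ℕ → ℤ
  | 0 => 0
  | 1 => 8
  | (k+2) => 14 * c (k+1) - c k + 6

def d : ℕ → ℤ
  | 0 => -1
  | 1 => -3
  | (l+2) => 14 * d (l+1) - d l + 8

lemma c_aux : ∀ k, 0 ≤ c k ∧ c k ≤ c (k+1) ∧ c k % 2 = 0 ∧ c (k+1) % 2 = 0 := by
  intro k
  induction k with
  | zero => simp [c]
  | succ n ih =>
    obtain ⟨h0, h1, h2, h3⟩ := ih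
    have hc2 : c (n+1+1) = 14 * c (n+1) - c n + 6 := rfl
    refine ⟨by linarith, by omega, h3, by omega⟩

lemma c_ge : ∀ k, 8 ≤ c (k+1) := by
  intro k
  induction k with
  | zero => norm_num [c]
  | succ n ih => have := (c_aux (n+1)).2.1; linarith

lemma d_aux : ∀ l, d l ≤ -1 ∧ d (l+1) ≤ d l := by
  intro l
  induction l with
  | zero => norm_num [d]
  | succ n ih =>
    obtain ⟨h0, h1⟩ := ih
    have hd2 : d (n+1+1) = 14 * d (n+1) - d n + 8 := rfl
    constructor <;> omega

theorem stmt_7 : ∀ k l : ℕ, 1 ≤ k →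
    (1 + c k * d l < 0 ∧ Odd (1 + c k * d l)) ∧
    ¬ ∃ w : ℤ√(-2), ((1 + c k * d l : ℤ) : ℤ√(-2)) = w^2 := by
  intro k l hk
  obtain ⟨k, rfl⟩ : ∃ n, k = n + 1 := ⟨k - 1, by omega⟩
  have hc8 : 8 ≤ c (k+1) := c_ge k
  have hce : c (k+1) % 2 = 0 := (c_aux (k+1)).2.2.1
  have hd1 : d l ≤ -1 := (d_aux l).1
  have hneg : 1 + c (k+1) * d l < 0 := by nlinarith
  obtain ⟨m, hm⟩ : Even (c (k+1)) := Int.even_iff.mpr hce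
  have hodd : Odd (1 + c (k+1) * d l) := ⟨m * d l, by rw [hm]; ring⟩
  refine ⟨⟨hneg, hodd⟩, ?_⟩
  rintro ⟨w, hw⟩
  set a : ℤ := 1 + c (k+1) * d l with ha
  have hre := congrArg Zsqrtd.re hw
  have him := congrArg Zsqrtd.im hw
  simp [pow_two, Zsqrtd.re_mul] at hre
  simp [pow_two, Zsqrtd.im_mul] at him
  have : w.re = 0 ∨ w.im = 0 := by
    rcases mul_eq_zero.mp (by linarith : w.re * w.im = 0) with h | h
    · exact Or.inl h
    · exact Or.inr h
  rcases this with h | h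
  · rw [h] at hre
    exact (Int.not_odd_iff_even.mpr ⟨-(w.im*w.im), by linear_combination hre⟩) hodd
  · rw [h] at hre
    nlinarith
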